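/- Let g be in Monge form with k₁ ≠ k₂. The origin is a red sub-parabolic point, i.e. v₂κ₁(0,0) = 0 where v₂ is the unit principal vector field with v₂(0) = ∂/∂v, if and only if a₂₁ = 0. -/

import Mathlib

/-! Differentiating the characteristic equation of `κ₁` along the `v`-axis at the origin,
where `E = G = 1`, `F = M = 0` and `E, F, G` are stationary, every term cancels except
`(k₁ - k₂)(∂κ₁/∂v - a₂₁)`; as `k₁ ≠ k₂` and `v₂(0) = ∂/∂v`, this gives `v₂κ₁(0) = a₂₁`. -/

noncomputable section

/-- Partial derivative in the first variable. -/
def pdu (f : ℝ × ℝ → ℝ) (p : ℝ × ℝ) : ℝ := fderiv ℝ f p (1, 0)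

/-- Partial derivative in the second variable. -/
def pdv (f : ℝ × ℝ → ℝ) (p : ℝ × ℝ) : ℝ := fderiv ℝ f p (0, 1)

/-- Coefficient `E` of the first fundamental form of the Monge surface `(u,v,f(u,v))`. -/
def Ee (f : ℝ × ℝ → ℝ) (p : ℝ × ℝ) : ℝ := 1 + (pdu f p) ^ 2

/-- Coefficient `F` of the first fundamental form. -/
def Ff (f : ℝ × ℝ → ℝ) (p : ℝ × ℝ) : ℝ := pdu f p * pdv f p

/-- Coefficient `G` of the first fundamental form. -/
def Gg (f : ℝ × ℝ → ℝ) (p : ℝ × ℝ) : ℝ := 1 + (pdv f p) ^ 2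

/-- Coefficient `L` of the second fundamental form. -/
def Ll (f : ℝ × ℝ → ℝ) (p : ℝ × ℝ) : ℝ :=
  pdu (pdu f) p / Real.sqrt (1 + (pdu f p) ^ 2 + (pdv f p) ^ 2)

/-- Coefficient `M` of the second fundamental form. -/
def Mm (f : ℝ × ℝ → ℝ) (p : ℝ × ℝ) : ℝ :=
  pdv (pdu f) p / Real.sqrt (1 + (pdu f p) ^ 2 + (pdv f p) ^ 2)

/-- Coefficient `N` of the second fundamental form. -/
def Nn (f : ℝ × ℝ → ℝ) (p : ℝ × ℝ) : ℝ :=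
  pdv (pdv f) p / Real.sqrt (1 + (pdu f p) ^ 2 + (pdv f p) ^ 2)

/-- `κ p` is a principal curvature of the Monge surface `(u,v,f(u,v))` at `p`:
it is a root of the characteristic equation
`(EG-F²)κ² - (EN-2FM+GL)κ + (LN-M²) = 0`. -/
def IsPrincipalCurvature (f : ℝ × ℝ → ℝ) (κ : ℝ × ℝ → ℝ) (p : ℝ × ℝ) : Prop :=
  (Ee f p * Gg f p - Ff f p ^ 2) * κ p ^ 2
    - (Ee f p * Nn f p - 2 * Ff f p * Mm f p + Gg f p * Ll f p) * κ p
    + (Ll f p * Nn f p - Mm f p ^ 2) = 0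

/-- `w` is a unit principal vector field for the principal curvature function `κ`:
`II·w = κ I·w` and `w` has unit length with respect to the first fundamental form. -/
def IsPrincipalField (f : ℝ × ℝ → ℝ) (κ : ℝ × ℝ → ℝ) (w : ℝ × ℝ → ℝ × ℝ)
    (p : ℝ × ℝ) : Prop :=
  Ll f p * (w p).1 + Mm f p * (w p).2 = κ p * (Ee f p * (w p).1 + Ff f p * (w p).2) ∧
  Mm f p * (w p).1 + Nn f p * (w p).2 = κ p * (Ff f p * (w p).1 + Gg f p * (w p).2) ∧
  Ee f p * (w p).1 ^ 2 + 2 * Ff f p * (w p).1 * (w p).2 + Gg f p * (w p).2 ^ 2 = 1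

/-- Directional derivative of a function along a vector field. -/
def dirDeriv (w : ℝ × ℝ → ℝ × ℝ) (h : ℝ × ℝ → ℝ) (p : ℝ × ℝ) : ℝ :=
  fderiv ℝ h p (w p)

open Filter Topology

lemma contDiff_pdu {f : ℝ × ℝ → ℝ} {n : WithTop ℕ∞} (hf : ContDiff ℝ (n + 1) f) :
    ContDiff ℝ n (pdu f) :=
  (hf.fderiv_right le_rfl).clm_apply contDiff_const

lemma contDiff_pdv {f : ℝ × ℝ → ℝ} {n : WithTop ℕ∞} (hf : ContDiff ℝ (n + 1) f) :
    ContDiff ℝ n (pdv f) :=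
  (hf.fderiv_right le_rfl).clm_apply contDiff_const

lemma hasDerivAt_pdv {g : ℝ × ℝ → ℝ} {x y : ℝ} (hg : DifferentiableAt ℝ g (x, y)) :
    HasDerivAt (fun t : ℝ => g (x, t)) (pdv g (x, y)) y := by
  have hline : HasDerivAt (fun t : ℝ => (x, t)) ((0 : ℝ), (1 : ℝ)) y :=
    (hasDerivAt_const _ _).prodMk (hasDerivAt_id _)
  simpa [pdv, Function.comp_def] using hg.hasFDerivAt.comp_hasDerivAt y hline

lemma sub_mul_sub_eq_zero_of_charPoly_eq_zero {E F G L M N κ : ℝ → ℝ} {s L' M' N' κ' : ℝ}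
    (hE : HasDerivAt E 0 s) (hF : HasDerivAt F 0 s) (hG : HasDerivAt G 0 s)
    (hL : HasDerivAt L L' s) (hM : HasDerivAt M M' s) (hN : HasDerivAt N N' s)
    (hκ : HasDerivAt κ κ' s)
    (hE₀ : E s = 1) (hF₀ : F s = 0) (hG₀ : G s = 1) (hM₀ : M s = 0) (hL₀ : L s = κ s)
    (hroot : ∀ᶠ t in 𝓝 s, (E t * G t - F t ^ 2) * κ t ^ 2
      - (E t * N t - 2 * F t * M t + G t * L t) * κ t + (L t * N t - M t ^ 2) = 0) :
    (κ s - N s) * (κ' - L') = 0 := by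
  have hderiv := ((((hE.fun_mul hG).fun_sub (hF.fun_pow 2)).fun_mul (hκ.fun_pow 2)).fun_sub
      ((((hE.fun_mul hN).fun_sub ((hF.const_mul 2).fun_mul hM)).fun_add
        (hG.fun_mul hL)).fun_mul hκ)).fun_add ((hL.fun_mul hN).fun_sub (hM.fun_pow 2))
  have hcharPoly := hderiv.unique ((hasDerivAt_const s 0).congr_of_eventuallyEq hroot)
  norm_num [hE₀, hF₀, hG₀, hM₀, hL₀] at hcharPoly
  linear_combination hcharPoly

section MongeCoefficients

variable {f g : ℝ × ℝ → ℝ} {x y : ℝ}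

lemma hasDerivAt_Ee_vertical (hP : DifferentiableAt ℝ (pdu f) (x, y)) (hP₀ : pdu f (x, y) = 0) :
    HasDerivAt (fun t => Ee f (x, t)) 0 y := by
  simpa [Ee, hP₀] using ((hasDerivAt_pdv hP).fun_pow 2).const_add 1

lemma hasDerivAt_Ff_vertical (hP : DifferentiableAt ℝ (pdu f) (x, y))
    (hQ : DifferentiableAt ℝ (pdv f) (x, y)) (hP₀ : pdu f (x, y) = 0) (hQ₀ : pdv f (x, y) = 0) :
    HasDerivAt (fun t => Ff f (x, t)) 0 y := by
  simpa [Ff, hP₀, hQ₀] using (hasDerivAt_pdv hP).fun_mul (hasDerivAt_pdv hQ)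

lemma hasDerivAt_Gg_vertical (hQ : DifferentiableAt ℝ (pdv f) (x, y)) (hQ₀ : pdv f (x, y) = 0) :
    HasDerivAt (fun t => Gg f (x, t)) 0 y := by
  simpa [Gg, hQ₀] using ((hasDerivAt_pdv hQ).fun_pow 2).const_add 1

lemma hasDerivAt_div_sqrt_vertical (hg : DifferentiableAt ℝ g (x, y))
    (hP : DifferentiableAt ℝ (pdu f) (x, y)) (hQ : DifferentiableAt ℝ (pdv f) (x, y))
    (hP₀ : pdu f (x, y) = 0) (hQ₀ : pdv f (x, y) = 0) :
    HasDerivAt (fun t => g (x, t) / √(1 + pdu f (x, t) ^ 2 + pdv f (x, t) ^ 2))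
      (pdv g (x, y)) y := by
  have hradicand :=
    (((hasDerivAt_pdv hP).fun_pow 2).const_add 1).fun_add ((hasDerivAt_pdv hQ).fun_pow 2)
  have hsqrt := hradicand.sqrt (by simp [hP₀, hQ₀])
  simpa [hP₀, hQ₀] using (hasDerivAt_pdv hg).fun_div hsqrt (by simp [hP₀, hQ₀])

end MongeCoefficients

theorem pdv_eq_of_isPrincipalCurvature {f κ : ℝ × ℝ → ℝ} {x y : ℝ} (hf : ContDiff ℝ 3 f)
    (hP₀ : pdu f (x, y) = 0) (hQ₀ : pdv f (x, y) = 0) (hM₀ : pdv (pdu f) (x, y) = 0)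
    (hκ : DifferentiableAt ℝ κ (x, y)) (hκL : κ (x, y) = pdu (pdu f) (x, y))
    (hκN : κ (x, y) ≠ pdv (pdv f) (x, y))
    (hroot : ∀ᶠ q in 𝓝 (x, y), IsPrincipalCurvature f κ q) :
    pdv κ (x, y) = pdv (pdu (pdu f)) (x, y) := by
  have hP : ContDiff ℝ 2 (pdu f) := contDiff_pdu hf
  have hQ : ContDiff ℝ 2 (pdv f) := contDiff_pdv hf
  have hdiff {h : ℝ × ℝ → ℝ} (hh : ContDiff ℝ 1 h) : DifferentiableAt ℝ h (x, y) :=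
    hh.differentiable one_ne_zero _
  have hP' := hdiff (hP.of_le (by norm_num))
  have hQ' := hdiff (hQ.of_le (by norm_num))
  have hline : Tendsto (fun t : ℝ => (x, t)) (𝓝 y) (𝓝 (x, y)) :=
    (continuous_const.prodMk continuous_id).tendsto y
  have h := sub_mul_sub_eq_zero_of_charPoly_eq_zero
    (hasDerivAt_Ee_vertical hP' hP₀) (hasDerivAt_Ff_vertical hP' hQ' hP₀ hQ₀)
    (hasDerivAt_Gg_vertical hQ' hQ₀)
    (hasDerivAt_div_sqrt_vertical (hdiff (contDiff_pdu hP)) hP' hQ' hP₀ hQ₀)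
    (hasDerivAt_div_sqrt_vertical (hdiff (contDiff_pdv hP)) hP' hQ' hP₀ hQ₀)
    (hasDerivAt_div_sqrt_vertical (hdiff (contDiff_pdv hQ)) hP' hQ' hP₀ hQ₀)
    (hasDerivAt_pdv hκ) (by simp [Ee, hP₀]) (by simp [Ff, hP₀]) (by simp [Gg, hQ₀])
    (by simp [hM₀]) (by simp [hP₀, hQ₀, hκL]) (hline.eventually hroot)
  simpa [Nn, hP₀, hQ₀, sub_eq_zero, hκN] using h

theorem stmt12_general
    (f : ℝ × ℝ → ℝ) (hf : ContDiff ℝ (⊤ : ℕ∞) f)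
    (k1 k2 a21 : ℝ) (hk : k1 ≠ k2)
    (h10 : pdu f 0 = 0) (h01 : pdv f 0 = 0)
    (h20 : pdu (pdu f) 0 = k1) (h11 : pdv (pdu f) 0 = 0) (h02 : pdv (pdv f) 0 = k2)
    (h21 : pdv (pdu (pdu f)) 0 = a21)
    (κ : ℝ × ℝ → ℝ) (hκs : ContDiffAt ℝ (⊤ : ℕ∞) κ 0) (hκ0 : κ 0 = k1)
    (hκeig : ∀ᶠ p in nhds (0 : ℝ × ℝ), IsPrincipalCurvature f κ p)
    (w : ℝ × ℝ → ℝ × ℝ) (hw0 : w 0 = (0, 1)) :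
    dirDeriv w κ 0 = 0 ↔ a21 = 0 := by
  have hκv : pdv κ 0 = a21 := h21 ▸ pdv_eq_of_isPrincipalCurvature (x := 0) (y := 0)
    (hf.of_le (WithTop.coe_le_coe.mpr le_top)) h10 h01 h11 (hκs.differentiableAt (by simp))
    (hκ0.trans h20.symm) (by rwa [← hκ0, ← h02] at hk) hκeig
  have hdir : dirDeriv w κ 0 = pdv κ 0 := by rw [dirDeriv, hw0]; rfl
  rw [hdir, hκv]

/-- The origin is a red sub-parabolic point (`v₂κ₁(0) = 0`, where `v₂` is the unit
principal vector field of the other principal curvature `κ₂`, with `v₂(0) = ∂/∂v`)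
iff `a₂₁ = 0`. -/
theorem stmt12
    (f : ℝ × ℝ → ℝ) (hf : ContDiff ℝ (⊤ : ℕ∞) f)
    (k1 k2 a30 a21 a12 a03 a40 a31 a22 : ℝ) (hk : k1 ≠ k2)
    (h00 : f 0 = 0) (h10 : pdu f 0 = 0) (h01 : pdv f 0 = 0)
    (h20 : pdu (pdu f) 0 = k1) (h11 : pdv (pdu f) 0 = 0) (h02 : pdv (pdv f) 0 = k2)
    (h30 : pdu (pdu (pdu f)) 0 = a30) (h21 : pdv (pdu (pdu f)) 0 = a21)
    (h12 : pdv (pdv (pdu f)) 0 = a12) (h03 : pdv (pdv (pdv f)) 0 = a03)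
    (h40 : pdu (pdu (pdu (pdu f))) 0 = a40)
    (h31 : pdv (pdu (pdu (pdu f))) 0 = a31)
    (h22 : pdv (pdv (pdu (pdu f))) 0 = a22)
    (κ : ℝ × ℝ → ℝ) (hκs : ContDiffAt ℝ (⊤ : ℕ∞) κ 0) (hκ0 : κ 0 = k1)
    (hκeig : ∀ᶠ p in nhds (0 : ℝ × ℝ), IsPrincipalCurvature f κ p)
    (κ' : ℝ × ℝ → ℝ) (hκ's : ContDiffAt ℝ (⊤ : ℕ∞) κ' 0) (hκ'0 : κ' 0 = k2)
    (hκ'eig : ∀ᶠ p in nhds (0 : ℝ × ℝ), IsPrincipalCurvature f κ' p)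
    (w : ℝ × ℝ → ℝ × ℝ) (hws : ContDiffAt ℝ (⊤ : ℕ∞) w 0) (hw0 : w 0 = (0, 1))
    (hw : ∀ᶠ p in nhds (0 : ℝ × ℝ), IsPrincipalField f κ' w p) :
    dirDeriv w κ 0 = 0 ↔ a21 = 0 :=
  stmt12_general f hf k1 k2 a21 hk h10 h01 h20 h11 h02 h21 κ hκs hκ0 hκeig w hw0
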